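/- (Gaussian hypothesis-testing dominance, anisotropic case.) Let d ≥ 1 and σ₁, …, σ_d > 0, and for v ∈ ℝ^d let P_v denote the Gaussian product measure on ℝ^d whose i-th coordinate is the Gaussian measure on ℝ with mean v_i and variance σ_i². Let Φ(t) denote the standard normal CDF, Φ(t) = (2π)^{−1/2}·∫_{−∞}^t e^{−u²/2} du. Then for all v, w ∈ ℝ^d, every Borel set E ⊆ ℝ^d, and every a ∈ ℝ: if P_v(E) ≥ Φ(a) then P_w(E) ≥ Φ(a − μ), where μ = √(∑_{i=1}^d (v_i − w_i)²/σ_i²). -/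

import Mathlib

open MeasureTheory ProbabilityTheory

noncomputable def stdNormalCDF (t : ℝ) : ℝ :=
  ∫ u in Set.Iic t, (Real.sqrt (2 * Real.pi))⁻¹ * Real.exp (-u ^ 2 / 2)

/-!
The log-likelihood ratio `ℓ = log (dP_w / dP_v)` is an affine function of `x`, so under both
`P_v` and `P_w` it is a real Gaussian of variance `μ²`, with means `-μ²/2` and `μ²/2`. By the
Neyman–Pearson lemma, the sublevel set `{ℓ ≤ t}` of `P_v`-measure `Φ(a)` has the least
`P_w`-measure among all sets of `P_v`-measure at least `Φ(a)`, and that measure is `Φ(a - μ)`.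
-/

open scoped NNReal ENNReal

theorem lintegral_fin_nat_prod_eq_prod {n : ℕ} {E : Fin n → Type*}
    {mE : ∀ i, MeasurableSpace (E i)} {μ : (i : Fin n) → Measure (E i)} [∀ i, SigmaFinite (μ i)]
    {f : (i : Fin n) → E i → ℝ≥0∞} (hf : ∀ i, Measurable (f i)) :
    ∫⁻ x, ∏ i, f i (x i) ∂Measure.pi μ = ∏ i, ∫⁻ x, f i x ∂μ i := by
  induction n with
  | zero => simp
  | succ n ih =>
    calc
      _ = ∫⁻ x : E 0 × ((i : Fin n) → E (Fin.succAbove 0 i)),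
            f 0 x.1 * ∏ i : Fin n, f (Fin.succAbove 0 i) (x.2 i)
            ∂(μ 0).prod (Measure.pi fun i ↦ μ (Fin.succAbove 0 i)) := by
        rw [← (measurePreserving_piFinSuccAbove μ 0).lintegral_comp_emb
          (MeasurableEquiv.measurableEmbedding _)]
        congr with x
        exact Fin.prod_univ_succAbove _ 0
      _ = _ := by
        rw [lintegral_prod_mul (μ := μ 0) (ν := Measure.pi fun i ↦ μ (Fin.succAbove 0 i))
          (g := fun y ↦ ∏ i : Fin n, f (Fin.succAbove 0 i) (y i)) (hf 0).aemeasurable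
          (Finset.measurable_prod _ fun i _ ↦ (hf _).comp (measurable_pi_apply i)).aemeasurable,
          ih fun i ↦ hf _, Fin.prod_univ_succAbove _ 0]

theorem lintegral_fintype_prod_eq_prod {ι : Type*} [Fintype ι] {E : ι → Type*}
    {mE : ∀ i, MeasurableSpace (E i)} {μ : (i : ι) → Measure (E i)} [∀ i, SigmaFinite (μ i)]
    {f : (i : ι) → E i → ℝ≥0∞} (hf : ∀ i, Measurable (f i)) :
    ∫⁻ x, ∏ i, f i (x i) ∂Measure.pi μ = ∏ i, ∫⁻ x, f i x ∂μ i := by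
  let e := (Fintype.equivFin ι).symm
  rw [← (measurePreserving_piCongrLeft _ e).lintegral_comp_emb
    (MeasurableEquiv.measurableEmbedding _)]
  simp_rw [← e.prod_comp, MeasurableEquiv.coe_piCongrLeft, Equiv.piCongrLeft_apply_apply,
    lintegral_fin_nat_prod_eq_prod fun i ↦ hf (e i)]

theorem MeasureTheory.Measure.pi_withDensity {ι : Type*} [Fintype ι] {α : ι → Type*}
    [∀ i, MeasurableSpace (α i)] (μ : ∀ i, Measure (α i)) [∀ i, SigmaFinite (μ i)]
    {f : ∀ i, α i → ℝ≥0∞} (hf : ∀ i, Measurable (f i))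
    [∀ i, SigmaFinite ((μ i).withDensity (f i))] :
    Measure.pi (fun i ↦ (μ i).withDensity (f i)) =
      (Measure.pi μ).withDensity fun x ↦ ∏ i, f i (x i) := by
  refine Measure.pi_eq fun s hs ↦ ?_
  rw [withDensity_apply _ (MeasurableSet.univ_pi hs), Measure.restrict_pi_pi,
    lintegral_fintype_prod_eq_prod (μ := fun i ↦ (μ i).restrict (s i)) hf]
  simp_rw [withDensity_apply _ (hs _)]

/-- The Neyman–Pearson lemma. -/
theorem withDensity_apply_le_of_sublevel {α : Type*} [MeasurableSpace α] {P : Measure α}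
    [IsFiniteMeasure P] {f : α → ℝ≥0∞} {A E : Set α} (hA : MeasurableSet A)
    (hE : MeasurableSet E) {κ : ℝ≥0∞} (hf_le : ∀ x ∈ A, f x ≤ κ) (hf_ge : ∀ x ∉ A, κ ≤ f x)
    (hAE : P A ≤ P E) :
    P.withDensity f A ≤ P.withDensity f E := by
  have hP_diff : P (A \ E) ≤ P (E \ A) := by
    rw [← measure_inter_add_sdiff A hE, ← measure_inter_add_sdiff E hA, Set.inter_comm] at hAE
    exact (ENNReal.add_le_add_iff_left (measure_ne_top _ _)).1 hAE
  calc P.withDensity f A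
      = P.withDensity f (A ∩ E) + ∫⁻ x in A \ E, f x ∂P := by
        rw [← withDensity_apply _ (hA.diff hE), measure_inter_add_sdiff A hE]
    _ ≤ P.withDensity f (A ∩ E) + ∫⁻ _ in A \ E, κ ∂P :=
        add_le_add_right (setLIntegral_mono' (hA.diff hE) fun x hx ↦ hf_le x hx.1) _
    _ ≤ P.withDensity f (A ∩ E) + ∫⁻ _ in E \ A, κ ∂P := by
        simp only [setLIntegral_const]
        gcongr
    _ ≤ P.withDensity f (A ∩ E) + ∫⁻ x in E \ A, f x ∂P :=
        add_le_add_right (setLIntegral_mono' (hE.diff hA) fun x hx ↦ hf_ge x hx.2) _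
    _ = P.withDensity f E := by
        rw [← withDensity_apply _ (hE.diff hA), Set.inter_comm, measure_inter_add_sdiff E hA]

theorem gaussianReal_eq_withDensity_gaussianReal (m m' : ℝ) {v : ℝ≥0} (hv : v ≠ 0) :
    gaussianReal m' v = (gaussianReal m v).withDensity
      fun x ↦ ENNReal.ofReal (Real.exp ((m' - m) / v * (x - (m + m') / 2))) := by
  rw [gaussianReal_of_var_ne_zero _ hv, gaussianReal_of_var_ne_zero _ hv,
    ← withDensity_mul _ (measurable_gaussianPDF _ _) (by fun_prop)]
  congr 1
  funext x
  simp only [Pi.mul_apply, gaussianPDF, gaussianPDFReal]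
  rw [← ENNReal.ofReal_mul (by positivity), mul_assoc _ (Real.exp _), ← Real.exp_add]
  congr 3
  have : (v : ℝ) ≠ 0 := by exact_mod_cast hv
  field_simp
  ring

theorem gaussianReal_zero_one_Iic (r : ℝ) :
    gaussianReal 0 1 (Set.Iic r) = ENNReal.ofReal (stdNormalCDF r) := by
  rw [gaussianReal_apply_eq_integral _ one_ne_zero, stdNormalCDF]
  congr 1
  refine setIntegral_congr_fun measurableSet_Iic fun x _ ↦ ?_
  simp [gaussianPDFReal, neg_div]

theorem gaussianReal_Iic (m : ℝ) {v : ℝ≥0} (hv : v ≠ 0) (r : ℝ) :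
    gaussianReal m v (Set.Iic r) = ENNReal.ofReal (stdNormalCDF ((r - m) / √v)) := by
  have hsqrt : 0 < √(v : ℝ) := Real.sqrt_pos.2 (by positivity)
  have hstd : gaussianReal m v = ((gaussianReal 0 1).map (√v * ·)).map (· + m) := by
    rw [gaussianReal_map_const_mul, gaussianReal_map_add_const, mul_zero, zero_add]
    congr
    ext
    simp
  have hpre : (fun x ↦ √v * x + m) ⁻¹' Set.Iic r = Set.Iic ((r - m) / √v) := by
    ext x
    simp [le_div_iff₀ hsqrt, le_sub_iff_add_le, mul_comm]
  rw [hstd, Measure.map_map (by fun_prop) (by fun_prop),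
    Measure.map_apply (by fun_prop) measurableSet_Iic]
  exact (congrArg _ hpre).trans (gaussianReal_zero_one_Iic _)

theorem map_pi_gaussianReal_sum_mul {ι : Type*} [Fintype ι] (m c : ι → ℝ) (s : ι → ℝ≥0) :
    (Measure.pi fun i ↦ gaussianReal (m i) (s i)).map (fun x ↦ ∑ i, c i * x i)
      = gaussianReal (∑ i, c i * m i) (∑ i, ‖c i‖₊ ^ 2 * s i) := by
  refine Measure.ext_of_charFun (funext fun t ↦ ?_)
  rw [charFun_apply_real, integral_map (by fun_prop : Measurable _).aemeasurable (by fun_prop),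
    charFun_gaussianReal]
  have hfactor (x : ι → ℝ) :
      Complex.exp (t * ↑(∑ i, c i * x i) * Complex.I)
        = ∏ i, Complex.exp (↑(t * c i) * x i * Complex.I) := by
    rw [← Complex.exp_sum]
    push_cast
    simp only [Finset.mul_sum, Finset.sum_mul, mul_assoc]
  simp_rw [hfactor]
  rw [integral_fintype_prod_eq_prod
    (f := fun i (x : ℝ) ↦ Complex.exp (↑(t * c i) * x * Complex.I))]
  simp_rw [← charFun_apply_real, charFun_gaussianReal, ← Complex.exp_sum]
  simp only [NNReal.coe_sum, NNReal.coe_mul, NNReal.coe_pow, coe_nnnorm, Real.norm_eq_abs,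
    sq_abs]
  push_cast
  simp only [Finset.sum_sub_distrib, Finset.sum_mul, Finset.sum_div, Finset.mul_sum]
  congr 2 <;> refine Finset.sum_congr rfl fun i _ ↦ by ring

section LogLikelihoodRatio

variable {ι : Type*} [Fintype ι]

noncomputable def gaussianLLR (v w : ι → ℝ) (s : ι → ℝ≥0) (x : ι → ℝ) : ℝ :=
  ∑ i, (w i - v i) / s i * (x i - (v i + w i) / 2)

noncomputable def mahalanobisSq (v w : ι → ℝ) (s : ι → ℝ≥0) : ℝ≥0 :=
  ∑ i, ‖w i - v i‖₊ ^ 2 / s i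

theorem coe_mahalanobisSq (v w : ι → ℝ) (s : ι → ℝ≥0) :
    (mahalanobisSq v w s : ℝ) = ∑ i, (w i - v i) ^ 2 / s i := by
  simp [mahalanobisSq]

theorem eq_of_mahalanobisSq_eq_zero {v w : ι → ℝ} {s : ι → ℝ≥0} (hs : ∀ i, s i ≠ 0)
    (h : mahalanobisSq v w s = 0) : v = w := by
  ext i
  have hi := Finset.sum_eq_zero_iff.1 h i (Finset.mem_univ i)
  simp only [div_eq_zero_iff, hs i, or_false, pow_eq_zero_iff two_ne_zero, nnnorm_eq_zero,
    sub_eq_zero] at hi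
  exact hi.symm

theorem gaussianLLR_self_left (v w : ι → ℝ) (s : ι → ℝ≥0) :
    gaussianLLR v w s v = -mahalanobisSq v w s / 2 := by
  simp only [gaussianLLR, coe_mahalanobisSq, neg_div, Finset.sum_div, ← Finset.sum_neg_distrib]
  refine Finset.sum_congr rfl fun i _ ↦ ?_
  ring

theorem gaussianLLR_self_right (v w : ι → ℝ) (s : ι → ℝ≥0) :
    gaussianLLR v w s w = mahalanobisSq v w s / 2 := by
  simp only [gaussianLLR, coe_mahalanobisSq, Finset.sum_div]
  refine Finset.sum_congr rfl fun i _ ↦ ?_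
  ring

@[fun_prop]
theorem measurable_gaussianLLR (v w : ι → ℝ) (s : ι → ℝ≥0) : Measurable (gaussianLLR v w s) := by
  unfold gaussianLLR
  fun_prop

theorem pi_gaussianReal_eq_withDensity_gaussianLLR (v w : ι → ℝ) {s : ι → ℝ≥0}
    (hs : ∀ i, s i ≠ 0) :
    Measure.pi (fun i ↦ gaussianReal (w i) (s i)) =
      (Measure.pi fun i ↦ gaussianReal (v i) (s i)).withDensity
        fun x ↦ ENNReal.ofReal (Real.exp (gaussianLLR v w s x)) := by
  rw [funext fun i ↦ gaussianReal_eq_withDensity_gaussianReal (v i) (w i) (hs i),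
    Measure.pi_withDensity _ fun i ↦ by fun_prop]
  congr with x
  rw [gaussianLLR, Real.exp_sum, ENNReal.ofReal_prod_of_nonneg fun i _ ↦ (Real.exp_pos _).le]

theorem map_pi_gaussianReal_gaussianLLR (u v w : ι → ℝ) (s : ι → ℝ≥0) :
    (Measure.pi fun i ↦ gaussianReal (u i) (s i)).map (gaussianLLR v w s) =
      gaussianReal (gaussianLLR v w s u) (mahalanobisSq v w s) := by
  have hLLR : gaussianLLR v w s = (· - ∑ i, (w i - v i) / s i * ((v i + w i) / 2)) ∘
      fun x ↦ ∑ i, (w i - v i) / s i * x i := by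
    ext x
    simp [gaussianLLR, mul_sub]
  rw [hLLR, ← Measure.map_map (by fun_prop) (by fun_prop), map_pi_gaussianReal_sum_mul,
    gaussianReal_map_sub_const]
  congr 1
  refine Finset.sum_congr rfl fun i _ ↦ ?_
  rcases eq_or_ne (s i) 0 with hsi | hsi
  · simp [hsi]
  · have hsi' : (s i : ℝ) ≠ 0 := by exact_mod_cast hsi
    apply NNReal.eq
    simp only [NNReal.coe_mul, NNReal.coe_div, NNReal.coe_pow, coe_nnnorm, Real.norm_eq_abs,
      sq_abs]
    field_simp

theorem pi_gaussianReal_gaussianLLR_le (u v w : ι → ℝ) {s : ι → ℝ≥0}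
    (hD : mahalanobisSq v w s ≠ 0) (t : ℝ) :
    Measure.pi (fun i ↦ gaussianReal (u i) (s i)) {x | gaussianLLR v w s x ≤ t} =
      ENNReal.ofReal
        (stdNormalCDF ((t - gaussianLLR v w s u) / √(mahalanobisSq v w s))) := by
  change Measure.pi _ (gaussianLLR v w s ⁻¹' Set.Iic t) = _
  rw [← Measure.map_apply (by fun_prop) measurableSet_Iic, map_pi_gaussianReal_gaussianLLR,
    gaussianReal_Iic _ hD]

end LogLikelihoodRatio

theorem gaussian_dominance_anisotropic_general (d : ℕ) (σ : Fin d → ℝ)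
    (hσ : ∀ i, 0 < σ i) (v w : Fin d → ℝ)
    (E : Set (Fin d → ℝ)) (hE : MeasurableSet E) (a : ℝ)
    (h : (Measure.pi fun i => gaussianReal (v i) ⟨σ i ^ 2, sq_nonneg (σ i)⟩) E
          ≥ ENNReal.ofReal (stdNormalCDF a)) :
    (Measure.pi fun i => gaussianReal (w i) ⟨σ i ^ 2, sq_nonneg (σ i)⟩) E
      ≥ ENNReal.ofReal
          (stdNormalCDF (a - Real.sqrt (∑ i, (v i - w i) ^ 2 / σ i ^ 2))) := by
  set s : Fin d → ℝ≥0 := fun i ↦ ⟨σ i ^ 2, sq_nonneg (σ i)⟩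
  have hs (i : Fin d) : s i ≠ 0 := NNReal.coe_ne_zero.1 (pow_pos (hσ i) 2).ne'
  have hD : ∑ i, (v i - w i) ^ 2 / σ i ^ 2 = mahalanobisSq v w s := by
    rw [coe_mahalanobisSq]
    exact Finset.sum_congr rfl fun i _ ↦ by rw [sub_sq_comm]; rfl
  rcases eq_or_ne (mahalanobisSq v w s) 0 with hD0 | hD0
  · obtain rfl := eq_of_mahalanobisSq_eq_zero hs hD0
    simpa [hD, hD0] using h
  set μ := √(mahalanobisSq v w s : ℝ)
  have hμ : 0 < μ := Real.sqrt_pos.2 (by positivity)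
  have hμ_sq : μ ^ 2 = mahalanobisSq v w s := Real.sq_sqrt (by positivity)
  set A := {x | gaussianLLR v w s x ≤ μ * a - μ ^ 2 / 2}
  have hPvA :
      Measure.pi (fun i ↦ gaussianReal (v i) (s i)) A = ENNReal.ofReal (stdNormalCDF a) := by
    rw [pi_gaussianReal_gaussianLLR_le _ _ _ hD0, gaussianLLR_self_left, ← hμ_sq,
      Real.sqrt_sq hμ.le]
    congr 2
    field_simp
    ring
  have hPwA :
      Measure.pi (fun i ↦ gaussianReal (w i) (s i)) A = ENNReal.ofReal (stdNormalCDF (a - μ)) := by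
    rw [pi_gaussianReal_gaussianLLR_le _ _ _ hD0, gaussianLLR_self_right, ← hμ_sq,
      Real.sqrt_sq hμ.le]
    congr 2
    field_simp
    ring
  rw [hD, ge_iff_le, ← hPwA, pi_gaussianReal_eq_withDensity_gaussianLLR v w hs]
  exact withDensity_apply_le_of_sublevel (measurableSet_le (by fun_prop) (by fun_prop)) hE
    (fun x hx ↦ ENNReal.ofReal_le_ofReal (Real.exp_le_exp.2 hx))
    (fun x hx ↦ ENNReal.ofReal_le_ofReal (Real.exp_le_exp.2 (not_le.1 hx).le)) (hPvA ▸ h)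

/-- Gaussian hypothesis-testing dominance, anisotropic case: for the Gaussian product
measure `P_v` on `ℝ^d` whose `i`-th coordinate has mean `v i` and variance `σ i ^ 2`,
if `P_v E ≥ Φ(a)` then `P_w E ≥ Φ(a - μ)` with `μ = √(∑ i, (v i - w i)² / σ i ^ 2)`. -/
theorem gaussian_dominance_anisotropic (d : ℕ) (hd : 1 ≤ d) (σ : Fin d → ℝ)
    (hσ : ∀ i, 0 < σ i) (v w : Fin d → ℝ)
    (E : Set (Fin d → ℝ)) (hE : MeasurableSet E) (a : ℝ)
    (h : (Measure.pi fun i => gaussianReal (v i) ⟨σ i ^ 2, sq_nonneg (σ i)⟩) E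
          ≥ ENNReal.ofReal (stdNormalCDF a)) :
    (Measure.pi fun i => gaussianReal (w i) ⟨σ i ^ 2, sq_nonneg (σ i)⟩) E
      ≥ ENNReal.ofReal
          (stdNormalCDF (a - Real.sqrt (∑ i, (v i - w i) ^ 2 / σ i ^ 2))) :=
  gaussian_dominance_anisotropic_general d σ hσ v w E hE a h
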